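/- For integers a ≥ 2 and b, c ≥ 1, ∑_{l,m,n≥1} (l+m+n)^{-a} l^{-b} m^{-c} = ∑_{i=0}^{c-1} C(b-1+i, i) ζ(a, b+i, c-i) + ∑_{i=0}^{b-1} C(c-1+i, i) ζ(a, c+i, b-i). -/

import Mathlib

/-!
With `x = l + 1`, `y = m + 1`, the partial fraction decomposition of `1 / (x ^ b * y ^ c)` in
powers of `x + y = l + m + 2` turns each summand into a combination, with binomial coefficients
as weights, of terms `(l + m + n + 3)⁻ᵃ (l + m + 2)⁻ᵏ (m + 1)⁻ʲ` and the same with `l, m` swapped;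
after renaming the summation indices these are the summands of triple zeta values. All series are
dominated by `((l + 1) (m + 1) (n + 1)) ^ (-4/3)`, which justifies the rearrangements.
-/

/-- The triple zeta value `ζ(k₁, k₂, k₃) = ∑_{m₁ > m₂ > m₃ > 0} ∏ m_j^{-k_j}`. -/
noncomputable def zeta3 (k₁ k₂ k₃ : ℕ) : ℝ :=
  ∑' (a : ℕ) (b : ℕ) (c : ℕ),
    1 / (((a : ℝ) + (b : ℝ) + (c : ℝ) + 3) ^ k₁ *
         ((b : ℝ) + (c : ℝ) + 2) ^ k₂ * ((c : ℝ) + 1) ^ k₃)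

open Finset

section PartialFractions

variable {K : Type*} [Field K]

/-- `b.multichoose i = (b - 1 + i).choose i` for `b ≠ 0`; unlike the right-hand side it also
makes the decomposition below correct when `b = 0`. -/
def partialFractionSum (s y : K) (b c : ℕ) : K :=
  ∑ i ∈ range c, (b.multichoose i : K) / (s ^ (b + i) * y ^ (c - i))

@[simp]
theorem partialFractionSum_zero_right (s y : K) (b : ℕ) : partialFractionSum s y b 0 = 0 := by
  simp [partialFractionSum]

theorem partialFractionSum_zero_left (s y : K) {c : ℕ} (hc : c ≠ 0) :
    partialFractionSum s y 0 c = 1 / y ^ c := by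
  obtain ⟨c, rfl⟩ := Nat.exists_eq_succ_of_ne_zero hc
  simp [partialFractionSum, sum_range_succ']

theorem partialFractionSum_succ_succ (s y : K) (b c : ℕ) :
    partialFractionSum s y (b + 1) (c + 1) =
      (partialFractionSum s y b (c + 1) + partialFractionSum s y (b + 1) c) / s := by
  simp only [partialFractionSum]
  conv_lhs => rw [sum_range_succ']
  conv_rhs => rw [sum_range_succ', add_div, add_div, add_right_comm, sum_div, sum_div, ← sum_add_distrib]
  congr 1
  · refine sum_congr rfl fun i _ => ?_
    rw [Nat.multichoose_succ_succ, Nat.add_sub_add_right]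
    push_cast
    ring
  · simp
    ring

theorem one_div_pow_mul_pow_eq_partialFractionSum {x y : K} (hx : x ≠ 0) (hy : y ≠ 0)
    (hxy : x + y ≠ 0) {b c : ℕ} (hbc : b + c ≠ 0) :
    1 / (x ^ b * y ^ c) =
      partialFractionSum (x + y) y b c + partialFractionSum (x + y) x c b := by
  induction b generalizing c with
  | zero => simp [partialFractionSum_zero_left _ _ (by simpa using hbc)]
  | succ b ihb =>
    induction c with
    | zero => simp [partialFractionSum_zero_left _ _ (Nat.succ_ne_zero b)]
    | succ c ihc =>
      calc 1 / (x ^ (b + 1) * y ^ (c + 1))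
          = (1 / (x ^ b * y ^ (c + 1)) + 1 / (x ^ (b + 1) * y ^ c)) / (x + y) := by
            field_simp
            ring
        _ = _ := by
          rw [ihb (by omega), ihc (by omega), partialFractionSum_succ_succ,
            partialFractionSum_succ_succ (x + y) x c b]
          ring

end PartialFractions

theorem mul_mul_rpow_four_thirds_le {X Y Z : ℝ} (hX : 0 ≤ X) (hY : 0 ≤ Y) (hZ : 0 ≤ Z) :
    (X * Y * Z) ^ (4 / 3 : ℝ) ≤ (X + Y + Z) ^ 2 * Y * Z := by
  have hP : 0 ≤ X * Y * Z := by positivity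
  have hS : 0 ≤ X + Y + Z := by positivity
  have hcube : X * Y * Z ≤ (X + Y + Z) ^ 3 := by
    calc X * Y * Z ≤ (X + Y + Z) * (X + Y + Z) * (X + Y + Z) := by gcongr <;> linarith
      _ = (X + Y + Z) ^ 3 := by ring
  have hroot : (X * Y * Z) ^ ((3 : ℕ) : ℝ)⁻¹ ≤ X + Y + Z :=
    calc (X * Y * Z) ^ ((3 : ℕ) : ℝ)⁻¹ ≤ ((X + Y + Z) ^ 3) ^ ((3 : ℕ) : ℝ)⁻¹ := by gcongr
      _ = X + Y + Z := Real.pow_rpow_inv_natCast hS three_ne_zero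
  calc (X * Y * Z) ^ (4 / 3 : ℝ) = X * Y * Z * (X * Y * Z) ^ ((3 : ℕ) : ℝ)⁻¹ := by
        rw [show (4 / 3 : ℝ) = 1 + ((3 : ℕ) : ℝ)⁻¹ by norm_num, Real.rpow_add' hP (by norm_num),
          Real.rpow_one]
    _ ≤ X * Y * Z * (X + Y + Z) := by gcongr
    _ ≤ (X + Y + Z) ^ 2 * Y * Z := by
      have : X * (X + Y + Z) ≤ (X + Y + Z) ^ 2 := by nlinarith
      calc X * Y * Z * (X + Y + Z) = X * (X + Y + Z) * (Y * Z) := by ring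
        _ ≤ (X + Y + Z) ^ 2 * (Y * Z) := by gcongr
        _ = _ := by ring

theorem summable_one_div_succ_mul_succ_mul_succ_rpow :
    Summable fun p : ℕ × ℕ × ℕ =>
      1 / (((p.1 : ℝ) + 1) * ((p.2.1 : ℝ) + 1) * ((p.2.2 : ℝ) + 1)) ^ (4 / 3 : ℝ) := by
  have h : Summable fun n : ℕ => 1 / ((n : ℝ) + 1) ^ (4 / 3 : ℝ) := by
    refine ((Real.summable_one_div_nat_add_rpow 1 (4 / 3)).2 (by norm_num)).congr fun n => ?_
    rw [abs_of_nonneg (by positivity)]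
  have hnn : 0 ≤ fun n : ℕ => 1 / ((n : ℝ) + 1) ^ (4 / 3 : ℝ) := fun n => by positivity
  refine (h.mul_of_nonneg (h.mul_of_nonneg h hnn hnn) hnn fun _ => by positivity).congr
    fun p => ?_
  obtain ⟨l, m, n⟩ := p
  rw [Real.mul_rpow (by positivity) (by positivity), Real.mul_rpow (by positivity) (by positivity)]
  ring

protected theorem Summable.tsum_prod_prod {α β γ δ : Type*} [AddCommGroup α] [UniformSpace α]
    [IsUniformAddGroup α] [CompleteSpace α] [T0Space α] {f : β × γ × δ → α} (h : Summable f) :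
    ∑' p, f p = ∑' (b) (c) (d), f (b, c, d) :=
  h.tsum_prod.trans (tsum_congr fun b => (h.prod_factor b).tsum_prod)

noncomputable def zeta3Term (k₁ k₂ k₃ : ℕ) : ℕ × ℕ × ℕ → ℝ
  | (a, b, c) => 1 / (((a : ℝ) + b + c + 3) ^ k₁ * ((b : ℝ) + c + 2) ^ k₂ * ((c : ℝ) + 1) ^ k₃)

theorem summable_zeta3Term {k₁ k₂ k₃ : ℕ} (h₁ : 2 ≤ k₁) (h₂ : 1 ≤ k₂) (h₃ : 1 ≤ k₃) :
    Summable (zeta3Term k₁ k₂ k₃) := by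
  refine summable_one_div_succ_mul_succ_mul_succ_rpow.of_nonneg_of_le
    (fun _ => by unfold zeta3Term; positivity) fun ⟨a, b, c⟩ => ?_
  refine one_div_le_one_div_of_le (by positivity) ?_
  calc (((a : ℝ) + 1) * ((b : ℝ) + 1) * ((c : ℝ) + 1)) ^ (4 / 3 : ℝ)
      ≤ ((a : ℝ) + b + c + 3) ^ 2 * ((b : ℝ) + 1) * ((c : ℝ) + 1) := by
        convert mul_mul_rpow_four_thirds_le (X := (a : ℝ) + 1) (Y := (b : ℝ) + 1)
          (Z := (c : ℝ) + 1) (by positivity) (by positivity) (by positivity) using 3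
        ring
    _ ≤ ((a : ℝ) + b + c + 3) ^ k₁ * ((b : ℝ) + c + 2) ^ k₂ * ((c : ℝ) + 1) ^ k₃ := by
        gcongr
        · norm_cast; omega
        · calc (b : ℝ) + 1 ≤ b + c + 2 := by norm_cast; omega
            _ ≤ _ := le_self_pow₀ (by norm_cast; omega) (by omega)
        · exact le_self_pow₀ (by norm_cast; omega) (by omega)

theorem hasSum_zeta3Term {k₁ k₂ k₃ : ℕ} (h₁ : 2 ≤ k₁) (h₂ : 1 ≤ k₂) (h₃ : 1 ≤ k₃) :
    HasSum (zeta3Term k₁ k₂ k₃) (zeta3 k₁ k₂ k₃) := by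
  have h := summable_zeta3Term h₁ h₂ h₃
  have hz : zeta3 k₁ k₂ k₃ = ∑' p, zeta3Term k₁ k₂ k₃ p := h.tsum_prod_prod.symm
  exact hz ▸ h.hasSum

theorem one_div_eq_sum_multichoose_mul_zeta3Term (a b c l m n : ℕ) (hbc : b + c ≠ 0) :
    1 / (((l : ℝ) + m + n + 3) ^ a * ((l : ℝ) + 1) ^ b * ((m : ℝ) + 1) ^ c) =
      (∑ i ∈ range c, (b.multichoose i : ℝ) * zeta3Term a (b + i) (c - i) (n, l, m)) +
      ∑ i ∈ range b, (c.multichoose i : ℝ) * zeta3Term a (c + i) (b - i) (n, m, l) := by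
  have hpf := one_div_pow_mul_pow_eq_partialFractionSum (x := (l : ℝ) + 1) (y := (m : ℝ) + 1)
    (by positivity) (by positivity) (by positivity) hbc
  rw [mul_assoc, ← one_div_mul_one_div, hpf, mul_add, partialFractionSum, partialFractionSum,
    mul_sum, mul_sum]
  congr 1 <;> refine sum_congr rfl fun i _ => ?_ <;> simp only [zeta3Term] <;> ring

theorem A3_zeta_as_triple_zetas (a b c : ℕ) (ha : 2 ≤ a) (hb : 1 ≤ b) (hc : 1 ≤ c) :
    (∑' (l : ℕ) (m : ℕ) (n : ℕ),
      1 / (((l : ℝ) + (m : ℝ) + (n : ℝ) + 3) ^ a * ((l : ℝ) + 1) ^ b * ((m : ℝ) + 1) ^ c)) =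
      (∑ i ∈ Finset.range c, (Nat.choose (b - 1 + i) i : ℝ) * zeta3 a (b + i) (c - i)) +
      (∑ i ∈ Finset.range b, (Nat.choose (c - 1 + i) i : ℝ) * zeta3 a (c + i) (b - i)) := by
  have choose_eq {k : ℕ} (hk : 1 ≤ k) (i : ℕ) : (k - 1 + i).choose i = k.multichoose i := by
    rw [Nat.multichoose_eq, Nat.sub_add_comm hk]
  have hasSum_comp (e : ℕ × ℕ × ℕ ≃ ℕ × ℕ × ℕ) (k₂ k₃ : ℕ) (h₂ : 1 ≤ k₂) (h₃ : 1 ≤ k₃) :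
      HasSum (zeta3Term a k₂ k₃ ∘ e) (zeta3 a k₂ k₃) :=
    e.hasSum_iff.2 (hasSum_zeta3Term ha h₂ h₃)
  let e₁ : ℕ × ℕ × ℕ ≃ ℕ × ℕ × ℕ :=
    ⟨fun p => (p.2.2, p.1, p.2.1), fun p => (p.2.1, p.2.2, p.1), fun _ => rfl, fun _ => rfl⟩
  let e₂ : ℕ × ℕ × ℕ ≃ ℕ × ℕ × ℕ :=
    ⟨fun p => (p.2.2, p.2.1, p.1), fun p => (p.2.2, p.2.1, p.1), fun _ => rfl, fun _ => rfl⟩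
  have hasSum_summand : HasSum
      (fun p : ℕ × ℕ × ℕ =>
        1 / (((p.1 : ℝ) + p.2.1 + p.2.2 + 3) ^ a * ((p.1 : ℝ) + 1) ^ b * ((p.2.1 : ℝ) + 1) ^ c))
      ((∑ i ∈ range c, (b.multichoose i : ℝ) * zeta3 a (b + i) (c - i)) +
        ∑ i ∈ range b, (c.multichoose i : ℝ) * zeta3 a (c + i) (b - i)) := by
    refine HasSum.congr_fun ?_ fun p =>
      one_div_eq_sum_multichoose_mul_zeta3Term a b c p.1 p.2.1 p.2.2 (by omega)
    refine (hasSum_sum fun i hi => ?_).add (hasSum_sum fun i hi => ?_)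
    · exact (hasSum_comp e₁ _ _ (by omega) (Nat.sub_pos_of_lt (mem_range.1 hi))).mul_left _
    · exact (hasSum_comp e₂ _ _ (by omega) (Nat.sub_pos_of_lt (mem_range.1 hi))).mul_left _
  simp only [choose_eq hb, choose_eq hc]
  rw [← hasSum_summand.tsum_eq, hasSum_summand.summable.tsum_prod_prod]
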